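/- arXiv:1411.2900 — 2 statements merged into one kernel-verified Lean document; each statement's English description precedes it below -/
import Mathlib

section
/- Let G : U × U → (0,∞] satisfy the local triangle property with constant C > 0. Then d(x,y) := G(x,y)⁻¹ + G(y,x)⁻¹ defines a quasi-metric on U: d is symmetric, d(x,x) = 0 whenever G(x,x) = ∞, and d(x,y) ≤ K·(d(x,z) + d(z,y)) for a constant K depending only on C. -/
open ENNReal NNReal

theorem stmt2 {U : Type*} [Nonempty U] (G : U → U → ℝ≥0∞) (C : ℝ≥0) (hC : 1 ≤ C)
    (hpos : ∀ x y, 0 < G x y) (hdiag : ∀ x, G x x = ⊤)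
    (htri : ∀ x y z, min (G x z) (G y z) ≤ (C : ℝ≥0∞) * G x y)
    (d : U → U → ℝ≥0∞) (hd : ∀ x y, d x y = (G x y)⁻¹ + (G y x)⁻¹) :
    (∀ x y, d x y = d y x) ∧ (∀ x, d x x = 0) ∧
      ∃ K : ℝ≥0, ∀ x y z, d x y ≤ (K : ℝ≥0∞) * (d x z + d z y) := by
  have hC0 : (C : ℝ≥0∞) ≠ 0 := by
    simpa using (lt_of_lt_of_le zero_lt_one (by exact_mod_cast hC)).ne'
  have hCt : (C : ℝ≥0∞) ≠ ⊤ := ENNReal.coe_ne_top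
  have key : ∀ x y z, (G x y)⁻¹ ≤ (C : ℝ≥0∞) * ((G x z)⁻¹ + (G y z)⁻¹) := by
    intro x y z
    have h1 : ((C : ℝ≥0∞) * G x y)⁻¹ ≤ (min (G x z) (G y z))⁻¹ :=
      ENNReal.inv_le_inv.mpr (htri x y z)
    rw [ENNReal.mul_inv (Or.inl hC0) (Or.inl hCt)] at h1
    have h2 : (min (G x z) (G y z))⁻¹ ≤ (G x z)⁻¹ + (G y z)⁻¹ := by
      rcases le_total (G x z) (G y z) with h | h
      · rw [min_eq_left h]; exact le_self_add
      · rw [min_eq_right h]; exact le_add_self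
    calc (G x y)⁻¹ = (C : ℝ≥0∞) * ((C : ℝ≥0∞)⁻¹ * (G x y)⁻¹) := by
          rw [← mul_assoc, ENNReal.mul_inv_cancel hC0 hCt, one_mul]
      _ ≤ (C : ℝ≥0∞) * ((G x z)⁻¹ + (G y z)⁻¹) :=
          mul_le_mul_right (le_trans h1 h2) _
  refine ⟨fun x y => by rw [hd, hd, add_comm], fun x => by
    rw [hd, hdiag, ENNReal.inv_top, add_zero], ⟨2 * C, fun x y z => ?_⟩⟩
  have k1 := key x y z
  have k2 := key y x z
  have hle : d x y ≤ (C : ℝ≥0∞) * (2 * ((G x z)⁻¹ + (G y z)⁻¹)) := by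
    rw [hd]
    calc (G x y)⁻¹ + (G y x)⁻¹
        ≤ (C : ℝ≥0∞) * ((G x z)⁻¹ + (G y z)⁻¹) +
          (C : ℝ≥0∞) * ((G y z)⁻¹ + (G x z)⁻¹) := add_le_add k1 k2
      _ = (C : ℝ≥0∞) * (2 * ((G x z)⁻¹ + (G y z)⁻¹)) := by ring
  refine hle.trans ?_
  have hsum : 2 * ((G x z)⁻¹ + (G y z)⁻¹) ≤ 2 * (d x z + d z y) := by
    apply mul_le_mul_right
    rw [hd, hd]
    calc (G x z)⁻¹ + (G y z)⁻¹ ≤ ((G x z)⁻¹ + (G z x)⁻¹) + ((G z y)⁻¹ + (G y z)⁻¹) := by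
          gcongr <;> simp
      _ = _ := rfl
  calc (C : ℝ≥0∞) * (2 * ((G x z)⁻¹ + (G y z)⁻¹)) ≤ (C : ℝ≥0∞) * (2 * (d x z + d z y)) :=
        mul_le_mul_right hsum _
    _ = ((2 * C : ℝ≥0) : ℝ≥0∞) * (d x z + d z y) := by push_cast; ring
end

section
/- Let (U, ρ) be a metric space, γ > 0, c ≥ 1, G : U × U → ℝ≥0∞ with c⁻¹ρ(x,y)^{-γ} ≤ G(x,y) ≤ cρ(x,y)^{-γ}. Let ν be a finite measure with support in A, and suppose for some x₀ ∈ A, ε > 0, δ > 0 we have: Gν(y) := ∫G(y,z)dν(z) < ε for all y ∈ A with ρ(y,x₀) < 2δ, and Gν(x₀) < ε. Then for every x with ρ(x,x₀) < δ such that A contains a nearest point to x, we have Gν(x) ≤ (2^γ c² + 1)·ε. -/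
open MeasureTheory ENNReal

/-! If `y` is a nearest point of `A` to `x`, then `dist y z ≤ 2 * dist x z` for every `z ∈ A`, so
comparability with `dist ^ (-γ)` gives `G x z ≤ 2 ^ γ * c ^ 2 * G y z` on the support of `ν`. Since
`dist x y ≤ dist x x₀ < δ`, the point `y` lies in the `2δ`-ball where `Gν < ε`. -/

theorem dist_le_two_mul_dist_of_isNearest {U : Type*} [PseudoMetricSpace U] {A : Set U}
    {x y z : U} (hy : ∀ w ∈ A, dist x y ≤ dist x w) (hz : z ∈ A) :
    dist y z ≤ 2 * dist x z := by
  linarith [dist_triangle_left y z x, hy z hz]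

theorem ENNReal.rpow_neg_le_mul_rpow_neg {a b k : ℝ≥0∞} {γ : ℝ} (hγ : 0 ≤ γ) (hk₀ : k ≠ 0)
    (hk : k ≠ ∞) (hab : a ≤ k * b) : b ^ (-γ) ≤ k ^ γ * a ^ (-γ) := by
  have hkγ₀ : k ^ γ ≠ 0 := (ENNReal.rpow_pos (pos_iff_ne_zero.mpr hk₀) hk).ne'
  have hkγ : k ^ γ ≠ ∞ := ENNReal.rpow_ne_top_of_nonneg hγ hk
  calc b ^ (-γ) = k ^ γ * (k ^ γ * b ^ γ)⁻¹ := by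
        rw [ENNReal.mul_inv (.inl hkγ₀) (.inl hkγ), ← mul_assoc,
          ENNReal.mul_inv_cancel hkγ₀ hkγ, one_mul, ENNReal.rpow_neg]
    _ ≤ k ^ γ * a ^ (-γ) := by
        rw [ENNReal.rpow_neg, ← ENNReal.mul_rpow_of_nonneg _ _ hγ]
        gcongr

section Kernel

variable {U : Type*} [PseudoMetricSpace U] {γ c : ℝ} {G : U → U → ℝ≥0∞}

theorem kernel_le_of_dist_le_mul (hγ : 0 ≤ γ) (hc : 0 < c)
    (hG : ∀ x y, (ENNReal.ofReal c)⁻¹ * (ENNReal.ofReal (dist x y)) ^ (-γ) ≤ G x y ∧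
      G x y ≤ ENNReal.ofReal c * (ENNReal.ofReal (dist x y)) ^ (-γ))
    {k : ℝ} (hk : 0 < k) {x y z : U} (h : dist y z ≤ k * dist x z) :
    G x z ≤ ENNReal.ofReal (k ^ γ * c ^ 2) * G y z := by
  set C := ENNReal.ofReal c
  have hC₀ : C ≠ 0 := by simpa [C] using hc
  have hdist : ENNReal.ofReal (dist y z) ≤ ENNReal.ofReal k * ENNReal.ofReal (dist x z) := by
    rw [← ENNReal.ofReal_mul hk.le]
    exact ENNReal.ofReal_le_ofReal h
  have hlow : ENNReal.ofReal (dist y z) ^ (-γ) ≤ C * G y z := by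
    rw [← ENNReal.inv_mul_le_iff hC₀ ofReal_ne_top]
    exact (hG y z).1
  calc G x z ≤ C * ENNReal.ofReal (dist x z) ^ (-γ) := (hG x z).2
    _ ≤ C * (ENNReal.ofReal k ^ γ * ENNReal.ofReal (dist y z) ^ (-γ)) := by
        gcongr
        exact ENNReal.rpow_neg_le_mul_rpow_neg hγ (by simpa using hk) ofReal_ne_top hdist
    _ ≤ C * (ENNReal.ofReal k ^ γ * (C * G y z)) := by gcongr
    _ = ENNReal.ofReal (k ^ γ * c ^ 2) * G y z := by
        rw [ENNReal.ofReal_mul (by positivity), ENNReal.ofReal_rpow_of_pos hk,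
          ENNReal.ofReal_pow hc.le]
        ring

variable [MeasurableSpace U]

theorem lintegral_kernel_le_of_isNearest (hγ : 0 ≤ γ) (hc : 0 < c)
    (hG : ∀ x y, (ENNReal.ofReal c)⁻¹ * (ENNReal.ofReal (dist x y)) ^ (-γ) ≤ G x y ∧
      G x y ≤ ENNReal.ofReal c * (ENNReal.ofReal (dist x y)) ^ (-γ))
    {ν : Measure U} {A : Set U} (hAν : ν Aᶜ = 0) {x y : U}
    (hy : ∀ w ∈ A, dist x y ≤ dist x w) :
    ∫⁻ z, G x z ∂ν ≤ ENNReal.ofReal (2 ^ γ * c ^ 2) * ∫⁻ z, G y z ∂ν := by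
  rw [← lintegral_const_mul' _ _ ofReal_ne_top]
  refine lintegral_mono_ae ?_
  filter_upwards [measure_eq_zero_iff_ae_notMem.mp hAν] with z hz
  exact kernel_le_of_dist_le_mul hγ hc hG two_pos
    (dist_le_two_mul_dist_of_isNearest hy (by simpa using hz))

end Kernel

theorem stmt5_general {U : Type*} [MetricSpace U] [MeasurableSpace U] (γ c : ℝ)
    (hγ : 0 < γ) (hc : 1 ≤ c) (G : U → U → ℝ≥0∞)
    (hG : ∀ x y, (ENNReal.ofReal c)⁻¹ * (ENNReal.ofReal (dist x y)) ^ (-γ) ≤ G x y ∧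
      G x y ≤ ENNReal.ofReal c * (ENNReal.ofReal (dist x y)) ^ (-γ))
    (ν : Measure U) (A : Set U)
    (hAν : ν Aᶜ = 0) (x₀ : U) (hx₀ : x₀ ∈ A) (ε δ : ℝ)
    (hball : ∀ y ∈ A, dist y x₀ < 2 * δ → ∫⁻ z, G y z ∂ν < ENNReal.ofReal ε) :
    ∀ x, dist x x₀ < δ →
      (∃ yx ∈ A, ∀ y ∈ A, dist x yx ≤ dist x y) →
      ∫⁻ z, G x z ∂ν ≤ ENNReal.ofReal ((2 ^ γ * c ^ 2 + 1) * ε) := by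
  rintro x hx ⟨y, hyA, hy⟩
  have hyx₀ : dist y x₀ < 2 * δ := by
    linarith [dist_triangle_left y x₀ x, hy x₀ hx₀]
  calc ∫⁻ z, G x z ∂ν ≤ ENNReal.ofReal (2 ^ γ * c ^ 2) * ∫⁻ z, G y z ∂ν :=
        lintegral_kernel_le_of_isNearest hγ.le (by linarith) hG hAν hy
    _ ≤ ENNReal.ofReal (2 ^ γ * c ^ 2 + 1) * ENNReal.ofReal ε := by
        gcongr
        · linarith
        · exact (hball y hyA hyx₀).le
    _ = ENNReal.ofReal ((2 ^ γ * c ^ 2 + 1) * ε) := (ENNReal.ofReal_mul (by positivity)).symm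

theorem stmt5 {U : Type*} [MetricSpace U] [MeasurableSpace U] (γ c : ℝ)
    (hγ : 0 < γ) (hc : 1 ≤ c) (G : U → U → ℝ≥0∞)
    (hG : ∀ x y, (ENNReal.ofReal c)⁻¹ * (ENNReal.ofReal (dist x y)) ^ (-γ) ≤ G x y ∧
      G x y ≤ ENNReal.ofReal c * (ENNReal.ofReal (dist x y)) ^ (-γ))
    (ν : Measure U) [IsFiniteMeasure ν] (A : Set U) (hAm : MeasurableSet A)
    (hAν : ν Aᶜ = 0) (x₀ : U) (hx₀ : x₀ ∈ A) (ε δ : ℝ) (hε : 0 < ε) (hδ : 0 < δ)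
    (hball : ∀ y ∈ A, dist y x₀ < 2 * δ → ∫⁻ z, G y z ∂ν < ENNReal.ofReal ε)
    (hx₀int : ∫⁻ z, G x₀ z ∂ν < ENNReal.ofReal ε) :
    ∀ x, dist x x₀ < δ →
      (∃ yx ∈ A, ∀ y ∈ A, dist x yx ≤ dist x y) →
      ∫⁻ z, G x z ∂ν ≤ ENNReal.ofReal ((2 ^ γ * c ^ 2 + 1) * ε) :=
  stmt5_general γ c hγ hc G hG ν A hAν x₀ hx₀ ε δ hball
end
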